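/- arXiv:1105.3698 — 5 statements merged into one kernel-verified Lean document; each statement's English description precedes it below -/
import Mathlib

section
/- There exists an absolute constant κ₀ > 0 such that the following holds. Let G be an additive abelian group, let μ : G → ℝ be a finitely supported function with μ ≥ 0 and ∑_{x∈G} μ(x) = 1, and let 0 < κ < κ₀. If ‖μ ∗ μ‖₂ > (1 − κ)·‖μ‖₂, then there exist z ∈ G and a finite nonempty set U ⊆ G such that ∑_{x∈G} |μ(x + z) − 1_U(x)/|U|| < 6·κ^{1/6}, ‖μ‖₂ < (1 + 4κ^{1/3})/|U|^{1/2}, and the additive energy of U satisfies E(U) > (1 − 40·κ^{1/6})·|U|³. -/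
open scoped BigOperators

/-- Convolution of two finitely supported real-valued functions on an additive group. -/
noncomputable def conv {G : Type*} [AddCommGroup G] (μ ν : G → ℝ) : G → ℝ :=
  fun x => ∑ᶠ y, μ (x - y) * ν y

/-- The ℓ² norm of a finitely supported real-valued function. -/
noncomputable def l2norm {G : Type*} [AddCommGroup G] (μ : G → ℝ) : ℝ :=
  Real.sqrt (∑ᶠ x, (μ x) ^ 2)

/-- The additive energy of a set `U`: the number of quadruples
`(u₁,u₂,u₃,u₄) ∈ U⁴` with `u₁ + u₂ = u₃ + u₄`. -/
noncomputable def addEnergySet {G : Type*} [AddCommGroup G] (U : Set G) : ℕ :=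
  Nat.card {p : (G × G) × G × G // p.1.1 ∈ U ∧ p.1.2 ∈ U ∧ p.2.1 ∈ U ∧ p.2.2 ∈ U ∧
    p.1.1 + p.1.2 = p.2.1 + p.2.2}

open Function Pointwise

section Helpers
variable {G : Type} [AddCommGroup G]

private lemma finsum_translate (f : G → ℝ) (a : G) : ∑ᶠ x, f (x + a) = ∑ᶠ x, f x :=
  finsum_comp_equiv (Equiv.addRight a)

private lemma sum_translate_eq_finsum (f : G → ℝ) (F : Finset G) (x : G)
    (h : ∀ y, f y ≠ 0 → y - x ∈ F) : ∑ d ∈ F, f (x + d) = ∑ᶠ y, f y := by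
  have h1 : support (fun d => f (x + d)) ⊆ ↑F := by
    intro d hd
    have := h (x + d) hd
    simpa using this
  calc ∑ d ∈ F, f (x + d) = ∑ᶠ d, f (x + d) :=
        (finsum_eq_sum_of_support_subset _ h1).symm
    _ = ∑ᶠ y, f y := finsum_comp_equiv (Equiv.addLeft x)

end Helpers

private lemma aux_P1 {P κ t : ℝ} (hκ : 0 < κ) (ht0 : 0 < t) (ht6 : t ^ (6:ℕ) = κ)
    (hP : 0 ≤ P) (hP12 : P ^ 2 ≤ 12 * κ) : P ≤ 4 * t ^ 3 := by
  by_contra hcc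
  push_neg at hcc
  have hp : (0:ℝ) ≤ 4 * t ^ 3 := by positivity
  have h2 : (4 * t ^ 3) * (4 * t ^ 3) < P * P := mul_self_lt_mul_self hp hcc
  nlinarith [hP12, h2, ht6, hκ]

private lemma aux_num1 {κ t : ℝ} (hκ : 0 < κ) (ht0 : 0 < t) (ht6 : t ^ (6:ℕ) = κ)
    (ht3 : t < 1/3) : 4 * κ + 4 * t ^ 3 < 6 * t := by
  have ht1 : t ≤ 1 := by linarith
  have h63 : t ^ 6 ≤ t ^ 3 := pow_le_pow_of_le_one ht0.le ht1 (by norm_num)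
  have h2 : t ^ 2 < 1/9 := by nlinarith
  have h3 : t ^ 3 < t / 9 := by nlinarith [mul_lt_mul_of_pos_left h2 ht0]
  rw [← ht6]
  linarith

private lemma aux_num2 {κ t : ℝ} (hκ : 0 < κ) (ht0 : 0 < t) (ht6 : t ^ (6:ℕ) = κ)
    (ht1 : t ≤ 1) : 2 * κ < 4 * t ^ 2 := by
  have h62 : t ^ 6 ≤ t ^ 2 := pow_le_pow_of_le_one ht0.le ht1 (by norm_num)
  have h : 0 < t ^ 2 := pow_pos ht0 2
  rw [← ht6]; linarith

private lemma aux_scal {κ t : ℝ} (hκ : 0 < κ) (hκ₀ : κ < 1/1000) (ht0 : 0 < t)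
    (ht6 : t ^ (6:ℕ) = κ) (hsign : 0 < 1 - 40 * t) :
    (1 - 40 * t) * (1 + 4 * κ) ^ 3 < (1 - 40 * κ) ^ 3 := by
  have h40 : t < 1/40 := by linarith
  have e : κ = t * t ^ 5 := by rw [← ht6]; ring
  have h5 : t ^ 5 ≤ (1/40:ℝ) ^ 5 := pow_le_pow_left₀ ht0.le h40.le 5
  have h6 : κ ≤ t * (1/40:ℝ) ^ 5 := by
    rw [e]; exact mul_le_mul_of_nonneg_left h5 ht0.le
  have hκt : 133 * κ < 40 * t := by norm_num at h6; linarith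
  have hk2 : κ * κ ≤ κ * (1/1000) := mul_le_mul_of_nonneg_left hκ₀.le hκ.le
  have hk3 : κ ^ 2 * κ ≤ κ ^ 2 * (1/1000) := mul_le_mul_of_nonneg_left hκ₀.le (sq_nonneg κ)
  have ha : (1 + 4 * κ) ^ 3 ≤ 1 + 13 * κ := by nlinarith [hk2, hk3, hκ.le]
  have hb : 1 - 120 * κ ≤ (1 - 40 * κ) ^ 3 := by nlinarith [hk2, hk3, hκ.le]
  have hc : (1 - 40 * t) * (1 + 4 * κ) ^ 3 ≤ (1 - 40 * t) * (1 + 13 * κ) :=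
    mul_le_mul_of_nonneg_left ha hsign.le
  have hd : (1 - 40 * t) * (1 + 13 * κ) ≤ 1 + 13 * κ - 40 * t := by
    nlinarith [mul_nonneg ht0.le hκ.le]
  linarith

set_option maxHeartbeats 2000000 in
theorem stmt2 :
    ∃ κ₀ : ℝ, 0 < κ₀ ∧
    ∀ (G : Type) [AddCommGroup G] (μ : G → ℝ) (κ : ℝ),
      (Function.support μ).Finite → (∀ x, 0 ≤ μ x) → (∑ᶠ x, μ x) = 1 →
      0 < κ → κ < κ₀ →
      l2norm (conv μ μ) > (1 - κ) * l2norm μ →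
      ∃ (z : G) (U : Set G), U.Finite ∧ U.Nonempty ∧
        (∑ᶠ x, |μ (x + z) - Set.indicator U (fun _ => 1 / (U.ncard : ℝ)) x|)
            < 6 * κ ^ ((1 : ℝ) / 6) ∧
        l2norm μ < (1 + 4 * κ ^ ((1 : ℝ) / 3)) / Real.sqrt (U.ncard) ∧
        (addEnergySet U : ℝ) > (1 - 40 * κ ^ ((1 : ℝ) / 6)) * (U.ncard : ℝ) ^ 3 := by
  refine ⟨1/1000, by norm_num, ?_⟩
  intro G _ μ κ hfin hnn hsum hκ hκ₀ hyp
  classical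
  -- basic setup
  set S : Finset G := hfin.toFinset with hSdef
  have hSmem : ∀ {x : G}, μ x ≠ 0 → x ∈ S := fun hx => hfin.mem_toFinset.2 hx
  have hsupS : support μ ⊆ ↑S := fun x hx => hSmem hx
  have hsumS : ∑ x ∈ S, μ x = 1 := by
    rw [← finsum_eq_sum_of_support_subset μ hsupS]; exact hsum
  set Q : ℝ := ∑ᶠ x, μ x ^ 2 with hQdef
  have hsupSq : support (fun x => μ x ^ 2) ⊆ ↑S := by
    intro x hx
    exact hSmem (by simpa [pow_eq_zero_iff] using hx)
  have hQS : Q = ∑ x ∈ S, μ x ^ 2 := finsum_eq_sum_of_support_subset _ hsupSq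
  have hSne : S.Nonempty := by
    rcases Finset.eq_empty_or_nonempty S with h | h
    · exfalso; rw [h] at hsumS; simp at hsumS
    · exact h
  have hμle1 : ∀ x, μ x ≤ 1 := by
    intro x
    by_cases hx : x ∈ S
    · calc μ x ≤ ∑ y ∈ S, μ y := Finset.single_le_sum (fun y _ => hnn y) hx
        _ = 1 := hsumS
    · have : μ x = 0 := by
        by_contra h; exact hx (hSmem h)
      simp [this]
  have hQpos : 0 < Q := by
    obtain ⟨x, hx⟩ := hSne
    have hμx : μ x ≠ 0 := by simpa [hSdef, Set.Finite.mem_toFinset] using hx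
    have h1 : 0 < μ x ^ 2 := by positivity
    rw [hQS]
    calc (0:ℝ) < μ x ^ 2 := h1
      _ ≤ ∑ y ∈ S, μ y ^ 2 :=
        Finset.single_le_sum (f := fun y => μ y ^ 2) (fun y _ => sq_nonneg _) hx
  have hQ1 : Q ≤ 1 := by
    rw [hQS, ← hsumS]
    apply Finset.sum_le_sum
    intro x _
    have := hnn x
    nlinarith [hμle1 x]
  -- autocorrelation
  set ρ : G → ℝ := fun d => ∑ᶠ x, μ x * μ (x + d) with hρdef
  have hρsupp : ∀ d, support (fun x => μ x * μ (x + d)) ⊆ ↑S := by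
    intro d x hx
    exact hSmem (left_ne_zero_of_mul hx)
  have hρS : ∀ d, ρ d = ∑ x ∈ S, μ x * μ (x + d) := fun d =>
    finsum_eq_sum_of_support_subset _ (hρsupp d)
  have hρnn : ∀ d, 0 ≤ ρ d := by
    intro d; rw [hρS]
    exact Finset.sum_nonneg fun x _ => mul_nonneg (hnn x) (hnn _)
  set Δ : G → ℝ := fun d => ∑ᶠ x, (μ x - μ (x + d)) ^ 2 with hΔdef
  have hΔnn : ∀ d, 0 ≤ Δ d := fun d => finsum_nonneg fun x => sq_nonneg _
  have hΔρ : ∀ d, Δ d = 2 * Q - 2 * ρ d := by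
    intro d
    set F : Finset G := S ∪ S.image (fun s => s - d) with hF
    have hsub1 : support (fun x => μ x ^ 2) ⊆ ↑F := by
      intro x hx
      exact Finset.mem_coe.2 (Finset.mem_union_left _ (hSmem (by simpa [pow_eq_zero_iff] using hx)))
    have hmem2 : ∀ x : G, μ (x + d) ≠ 0 → x ∈ F := by
      intro x hx
      apply Finset.mem_union_right
      exact Finset.mem_image.2 ⟨x + d, hSmem hx, by abel⟩
    have hsub2 : support (fun x => μ (x + d) ^ 2) ⊆ ↑F := by
      intro x hx
      exact Finset.mem_coe.2 (hmem2 x (by simpa [pow_eq_zero_iff] using hx))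
    have hsub3 : support (fun x => μ x * μ (x + d)) ⊆ ↑F := by
      intro x hx
      exact Finset.mem_coe.2 (Finset.mem_union_left _ (hSmem (left_ne_zero_of_mul hx)))
    have hsub0 : support (fun x => (μ x - μ (x + d)) ^ 2) ⊆ ↑F := by
      intro x hx
      by_cases h1 : μ x = 0
      · exact Finset.mem_coe.2 (hmem2 x (by
          intro h2
          apply hx
          simp [h1, h2]))
      · exact Finset.mem_coe.2 (Finset.mem_union_left _ (hSmem h1))
    have e0 : Δ d = ∑ x ∈ F, (μ x - μ (x + d)) ^ 2 :=
      finsum_eq_sum_of_support_subset _ hsub0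
    have e1 : ∑ x ∈ F, μ x ^ 2 = Q := (finsum_eq_sum_of_support_subset _ hsub1).symm
    have e2 : ∑ x ∈ F, μ (x + d) ^ 2 = Q := by
      rw [← finsum_eq_sum_of_support_subset _ hsub2, hQdef]
      exact finsum_translate (fun x => μ x ^ 2) d
    have e3 : ∑ x ∈ F, μ x * μ (x + d) = ρ d := by
      simp only [hρdef]
      exact (finsum_eq_sum_of_support_subset _ hsub3).symm
    calc Δ d = ∑ x ∈ F, (μ x ^ 2 + μ (x + d) ^ 2 - 2 * (μ x * μ (x + d))) := by
          rw [e0]; exact Finset.sum_congr rfl fun x _ => by ring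
      _ = (∑ x ∈ F, μ x ^ 2) + (∑ x ∈ F, μ (x + d) ^ 2)
            - 2 * ∑ x ∈ F, μ x * μ (x + d) := by
          rw [Finset.sum_sub_distrib, Finset.sum_add_distrib, Finset.mul_sum]
      _ = 2 * Q - 2 * ρ d := by rw [e1, e2, e3]; ring
  have hρQ : ∀ d, ρ d ≤ Q := by
    intro d
    have := hΔnn d
    rw [hΔρ d] at this
    linarith
  have hρneg : ∀ d, ρ (-d) = ρ d := by
    intro d
    have h1 : ∑ᶠ x, μ (x + d) * μ (x + d + -d) = ∑ᶠ y, μ y * μ (y + -d) :=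
      finsum_translate (fun y => μ y * μ (y + -d)) d
    have h2 : ∀ x : G, μ (x + d) * μ (x + d + -d) = μ x * μ (x + d) := by
      intro x
      rw [add_neg_cancel_right, mul_comm]
    rw [finsum_congr h2] at h1
    simp only [hρdef]
    exact h1.symm
  have hΔneg : ∀ d, Δ (-d) = Δ d := by
    intro d; rw [hΔρ, hΔρ, hρneg]
  have hΔsub : ∀ u v : G, Δ (u + v) ≤ 2 * Δ u + 2 * Δ v := by
    intro u v
    set F : Finset G := S ∪ (S.image (fun s => s - u) ∪ S.image (fun s => s - (u + v))) with hF
    have hmemS : ∀ x : G, μ x ≠ 0 → x ∈ F := fun x hx =>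
      Finset.mem_union_left _ (hSmem hx)
    have hmemU : ∀ x : G, μ (x + u) ≠ 0 → x ∈ F := by
      intro x hx
      exact Finset.mem_union_right _ (Finset.mem_union_left _
        (Finset.mem_image.2 ⟨x + u, hSmem hx, by abel⟩))
    have hmemUV : ∀ x : G, μ (x + (u + v)) ≠ 0 → x ∈ F := by
      intro x hx
      exact Finset.mem_union_right _ (Finset.mem_union_right _
        (Finset.mem_image.2 ⟨x + (u + v), hSmem hx, by abel⟩))
    have hsub0 : support (fun x => (μ x - μ (x + (u + v))) ^ 2) ⊆ ↑F := by
      intro x hx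
      by_cases h1 : μ x = 0
      · refine Finset.mem_coe.2 (hmemUV x ?_)
        intro h2; apply hx; simp [h1, h2]
      · exact Finset.mem_coe.2 (hmemS x h1)
    have hsub1 : support (fun x => (μ x - μ (x + u)) ^ 2) ⊆ ↑F := by
      intro x hx
      by_cases h1 : μ x = 0
      · refine Finset.mem_coe.2 (hmemU x ?_)
        intro h2; apply hx; simp [h1, h2]
      · exact Finset.mem_coe.2 (hmemS x h1)
    have hsub2 : support (fun x => (μ (x + u) - μ (x + u + v)) ^ 2) ⊆ ↑F := by
      intro x hx
      by_cases h1 : μ (x + u) = 0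
      · refine Finset.mem_coe.2 (hmemUV x ?_)
        intro h2
        apply hx
        have h3 : x + u + v = x + (u + v) := by abel
        have h4 : μ (x + u + v) = 0 := by rw [h3, h2]
        simp only [mem_support, ne_eq, not_not] at *
        rw [h1, h4]
        ring
      · exact Finset.mem_coe.2 (hmemU x h1)
    have e0 : Δ (u + v) = ∑ x ∈ F, (μ x - μ (x + (u + v))) ^ 2 :=
      finsum_eq_sum_of_support_subset _ hsub0
    have e1 : ∑ x ∈ F, (μ x - μ (x + u)) ^ 2 = Δ u :=
      (finsum_eq_sum_of_support_subset _ hsub1).symm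
    have e2 : ∑ x ∈ F, (μ (x + u) - μ (x + u + v)) ^ 2 = Δ v := by
      rw [← finsum_eq_sum_of_support_subset _ hsub2, hΔdef]
      exact finsum_translate (fun x => (μ x - μ (x + v)) ^ 2) u
    have hpt : ∀ x ∈ F, (μ x - μ (x + (u + v))) ^ 2 ≤
        2 * (μ x - μ (x + u)) ^ 2 + 2 * (μ (x + u) - μ (x + u + v)) ^ 2 := by
      intro x _
      have h : x + (u + v) = x + u + v := by abel
      rw [h]
      nlinarith [sq_nonneg (μ x - 2 * μ (x + u) + μ (x + u + v))]
    calc Δ (u + v) = ∑ x ∈ F, (μ x - μ (x + (u + v))) ^ 2 := e0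
      _ ≤ ∑ x ∈ F, (2 * (μ x - μ (x + u)) ^ 2 + 2 * (μ (x + u) - μ (x + u + v)) ^ 2) :=
          Finset.sum_le_sum hpt
      _ = 2 * (∑ x ∈ F, (μ x - μ (x + u)) ^ 2)
            + 2 * (∑ x ∈ F, (μ (x + u) - μ (x + u + v)) ^ 2) := by
          rw [Finset.sum_add_distrib, Finset.mul_sum, Finset.mul_sum]
      _ = 2 * Δ u + 2 * Δ v := by rw [e1, e2]
  -- difference set
  set D : Finset G := S - S with hDdef
  have hρD : ∀ d, ρ d ≠ 0 → d ∈ D := by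
    intro d hd
    have hex : ∃ x, μ x * μ (x + d) ≠ 0 := by
      by_contra h
      push_neg at h
      apply hd
      simp only [hρdef]
      calc ∑ᶠ x, μ x * μ (x + d) = ∑ᶠ _ : G, (0:ℝ) := finsum_congr h
        _ = 0 := finsum_zero
    obtain ⟨x, hx⟩ := hex
    have h1 : μ x ≠ 0 := left_ne_zero_of_mul hx
    have h2 : μ (x + d) ≠ 0 := right_ne_zero_of_mul hx
    have := Finset.sub_mem_sub (hSmem h2) (hSmem h1)
    simpa [add_sub_cancel_left] using this
  have hrsum : ∑ d ∈ D, ρ d = 1 := by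
    calc ∑ d ∈ D, ρ d = ∑ d ∈ D, ∑ x ∈ S, μ x * μ (x + d) :=
          Finset.sum_congr rfl fun d _ => hρS d
      _ = ∑ x ∈ S, ∑ d ∈ D, μ x * μ (x + d) := Finset.sum_comm
      _ = ∑ x ∈ S, μ x * ∑ d ∈ D, μ (x + d) :=
          Finset.sum_congr rfl fun x _ => by rw [Finset.mul_sum]
      _ = ∑ x ∈ S, μ x * 1 := by
          refine Finset.sum_congr rfl fun x hx => ?_
          congr 1
          rw [sum_translate_eq_finsum μ D x
            (fun y hy => Finset.sub_mem_sub (hSmem hy) hx), hsum]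
      _ = 1 := by simp [hsumS]
  -- sumset and convolution support
  set P : Finset G := S + S with hPdef
  have hconv : ∀ s, conv μ μ s = ∑ t ∈ S, μ (s - t) * μ t := by
    intro s
    apply finsum_eq_sum_of_support_subset
    intro t ht
    exact Finset.mem_coe.2 (hSmem (right_ne_zero_of_mul ht))
  have hconvP : ∀ s, conv μ μ s ≠ 0 → s ∈ P := by
    intro s hs
    have hex : ∃ t, μ (s - t) * μ t ≠ 0 := by
      by_contra h
      push_neg at h
      apply hs
      show ∑ᶠ t, μ (s - t) * μ t = 0
      calc ∑ᶠ t, μ (s - t) * μ t = ∑ᶠ _ : G, (0:ℝ) := finsum_congr h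
        _ = 0 := finsum_zero
    obtain ⟨t, ht⟩ := hex
    have h1 : μ (s - t) ≠ 0 := left_ne_zero_of_mul ht
    have h2 : μ t ≠ 0 := right_ne_zero_of_mul ht
    have := Finset.add_mem_add (hSmem h1) (hSmem h2)
    simpa [sub_add_cancel] using this
  -- A-side
  have hA : ∑ d ∈ D, ρ d ^ 2 = ∑ x ∈ S, ∑ y ∈ S, μ x * μ y * ρ (y - x) := by
    calc ∑ d ∈ D, ρ d ^ 2 = ∑ d ∈ D, ∑ x ∈ S, μ x * μ (x + d) * ρ d := by
          refine Finset.sum_congr rfl fun d _ => ?_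
          rw [sq, hρS d, Finset.sum_mul]
      _ = ∑ x ∈ S, ∑ d ∈ D, μ x * (μ (x + d) * ρ (x + d - x)) := by
          rw [Finset.sum_comm]
          exact Finset.sum_congr rfl fun x _ => Finset.sum_congr rfl fun d _ => by
            rw [add_sub_cancel_left]; ring
      _ = ∑ x ∈ S, μ x * ∑ d ∈ D, μ (x + d) * ρ (x + d - x) := by
          refine Finset.sum_congr rfl fun x _ => ?_
          rw [Finset.mul_sum]
      _ = ∑ x ∈ S, μ x * ∑ᶠ w, μ w * ρ (w - x) := by
          refine Finset.sum_congr rfl fun x hx => ?_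
          congr 1
          exact sum_translate_eq_finsum (fun w => μ w * ρ (w - x)) D x
            (fun y hy => Finset.sub_mem_sub (hSmem (left_ne_zero_of_mul hy)) hx)
      _ = ∑ x ∈ S, μ x * ∑ y ∈ S, μ y * ρ (y - x) := by
          refine Finset.sum_congr rfl fun x _ => ?_
          congr 1
          apply finsum_eq_sum_of_support_subset
          intro w hw
          exact Finset.mem_coe.2 (hSmem (left_ne_zero_of_mul hw))
      _ = ∑ x ∈ S, ∑ y ∈ S, μ x * μ y * ρ (y - x) := by
          refine Finset.sum_congr rfl fun x _ => ?_
          rw [Finset.mul_sum]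
          exact Finset.sum_congr rfl fun y _ => by ring
  -- B-side
  have hsubcsq : support (fun s => conv μ μ s ^ 2) ⊆ ↑P := by
    intro s hs
    refine Finset.mem_coe.2 (hconvP s ?_)
    intro h
    apply hs
    simp only [mem_support, ne_eq, not_not] at *
    rw [h]; ring
  have hB : ∑ᶠ s, conv μ μ s ^ 2 = ∑ y ∈ S, ∑ y' ∈ S, μ y * μ y' * ρ (y - y') := by
    calc ∑ᶠ s, conv μ μ s ^ 2 = ∑ s ∈ P, conv μ μ s ^ 2 :=
          finsum_eq_sum_of_support_subset _ hsubcsq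
      _ = ∑ s ∈ P, ∑ y ∈ S, ∑ y' ∈ S, (μ (s - y) * μ y) * (μ (s - y') * μ y') := by
          refine Finset.sum_congr rfl fun s _ => ?_
          rw [sq, hconv s, Finset.sum_mul_sum]
      _ = ∑ y ∈ S, ∑ y' ∈ S, ∑ s ∈ P, (μ (s - y) * μ y) * (μ (s - y') * μ y') := by
          rw [Finset.sum_comm]
          exact Finset.sum_congr rfl fun y _ => Finset.sum_comm
      _ = ∑ y ∈ S, ∑ y' ∈ S, ∑ s ∈ P,
            (fun w => μ w * μ y * (μ (w + (y - y')) * μ y')) (-y + s) := by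
          refine Finset.sum_congr rfl fun y _ => Finset.sum_congr rfl fun y' _ =>
            Finset.sum_congr rfl fun s _ => ?_
          have e1 : -y + s = s - y := by abel
          have e2 : s - y + (y - y') = s - y' := by abel
          simp only [e1, e2]
      _ = ∑ y ∈ S, ∑ y' ∈ S, ∑ w ∈ S, μ w * μ y * (μ (w + (y - y')) * μ y') := by
          refine Finset.sum_congr rfl fun y hy => Finset.sum_congr rfl fun y' _ => ?_
          have step1 : ∑ s ∈ P, (fun w => μ w * μ y * (μ (w + (y - y')) * μ y')) (-y + s)
              = ∑ᶠ w, μ w * μ y * (μ (w + (y - y')) * μ y') := by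
            apply sum_translate_eq_finsum (fun w => μ w * μ y * (μ (w + (y - y')) * μ y')) P (-y)
            intro w hw
            have hwS : μ w ≠ 0 := left_ne_zero_of_mul (left_ne_zero_of_mul hw)
            have := Finset.add_mem_add (hSmem hwS) hy
            simpa [sub_neg_eq_add] using this
          rw [step1]
          apply finsum_eq_sum_of_support_subset
          intro w hw
          exact Finset.mem_coe.2 (hSmem (left_ne_zero_of_mul (left_ne_zero_of_mul hw)))
      _ = ∑ y ∈ S, ∑ y' ∈ S, μ y * μ y' * ρ (y - y') := by
          refine Finset.sum_congr rfl fun y _ => Finset.sum_congr rfl fun y' _ => ?_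
          rw [hρS, Finset.mul_sum]
          exact Finset.sum_congr rfl fun w _ => by ring
  have hEsum : ∑ d ∈ D, ρ d ^ 2 = ∑ᶠ s, conv μ μ s ^ 2 := by
    rw [hA, hB, Finset.sum_comm]
    exact Finset.sum_congr rfl fun y _ => Finset.sum_congr rfl fun x _ => by ring
  -- convert hypothesis
  have hl2μ : l2norm μ = Real.sqrt Q := rfl
  have hEnn : (0:ℝ) ≤ ∑ d ∈ D, ρ d ^ 2 := Finset.sum_nonneg fun d _ => sq_nonneg _
  have hEQ : (1 - κ) ^ 2 * Q < ∑ d ∈ D, ρ d ^ 2 := by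
    have h1 : l2norm (conv μ μ) = Real.sqrt (∑ d ∈ D, ρ d ^ 2) := by
      rw [hEsum]; rfl
    rw [h1, hl2μ] at hyp
    have hκ1 : (0:ℝ) ≤ 1 - κ := by linarith
    have ha : 0 ≤ (1 - κ) * Real.sqrt Q := mul_nonneg hκ1 (Real.sqrt_nonneg _)
    have h2 : ((1 - κ) * Real.sqrt Q) * ((1 - κ) * Real.sqrt Q) <
        Real.sqrt (∑ d ∈ D, ρ d ^ 2) * Real.sqrt (∑ d ∈ D, ρ d ^ 2) :=
      mul_self_lt_mul_self ha hyp
    rw [Real.mul_self_sqrt hEnn] at h2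
    calc (1 - κ) ^ 2 * Q = (1 - κ) ^ 2 * (Real.sqrt Q * Real.sqrt Q) := by
          rw [Real.mul_self_sqrt hQpos.le]
      _ = ((1 - κ) * Real.sqrt Q) * ((1 - κ) * Real.sqrt Q) := by ring
      _ < _ := h2
  have hKey : ∑ d ∈ D, ρ d * (Q - ρ d) < 2 * κ * Q := by
    have expand : ∑ d ∈ D, ρ d * (Q - ρ d)
        = Q * (∑ d ∈ D, ρ d) - ∑ d ∈ D, ρ d ^ 2 := by
      rw [Finset.mul_sum, ← Finset.sum_sub_distrib]
      exact Finset.sum_congr rfl fun d _ => by ring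
    rw [expand, hrsum]
    nlinarith [hEQ, mul_pos hκ hQpos, sq_nonneg κ, mul_nonneg (mul_nonneg hκ.le hκ.le) hQpos.le]
  have htermnn : ∀ d ∈ D, 0 ≤ ρ d * (Q - ρ d) := fun d _ =>
    mul_nonneg (hρnn d) (sub_nonneg.2 (hρQ d))
  -- level sets
  set Uf : Finset G := D.filter (fun d => Q / 2 < ρ d) with hUfdef
  set Vf : Finset G := D.filter (fun d => Q * (19 / 20) < ρ d) with hVfdef
  have hVU : Vf ⊆ Uf := by
    intro d hd
    obtain ⟨hdD, hdq⟩ := Finset.mem_filter.1 hd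
    exact Finset.mem_filter.2 ⟨hdD, by nlinarith [hQpos]⟩
  have hUD : Uf ⊆ D := Finset.filter_subset _ _
  have hVD : Vf ⊆ D := Finset.filter_subset _ _
  -- mass outside Uf
  have houtU : ∑ d ∈ D \ Uf, ρ d ≤ 4 * κ := by
    have h1 : ∀ d ∈ D \ Uf, Q / 2 * ρ d ≤ ρ d * (Q - ρ d) := by
      intro d hd
      obtain ⟨hdD, hdn⟩ := Finset.mem_sdiff.1 hd
      have h2 : ¬ (Q / 2 < ρ d) := fun hc => hdn (Finset.mem_filter.2 ⟨hdD, hc⟩)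
      push_neg at h2
      nlinarith [hρnn d]
    have h3 : Q / 2 * ∑ d ∈ D \ Uf, ρ d ≤ ∑ d ∈ D \ Uf, ρ d * (Q - ρ d) := by
      rw [Finset.mul_sum]; exact Finset.sum_le_sum h1
    have h4 : ∑ d ∈ D \ Uf, ρ d * (Q - ρ d) ≤ ∑ d ∈ D, ρ d * (Q - ρ d) :=
      Finset.sum_le_sum_of_subset_of_nonneg (Finset.sdiff_subset) fun d hd _ => htermnn d hd
    by_contra hcon
    push_neg at hcon
    have h6 : Q / 2 * (4 * κ) < Q / 2 * ∑ d ∈ D \ Uf, ρ d :=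
      mul_lt_mul_of_pos_left hcon (by positivity)
    have h7 : Q / 2 * (4 * κ) = 2 * κ * Q := by ring
    linarith [h3, h4, hKey]
  have houtV : ∑ d ∈ D \ Vf, ρ d ≤ 40 * κ := by
    have h1 : ∀ d ∈ D \ Vf, Q / 20 * ρ d ≤ ρ d * (Q - ρ d) := by
      intro d hd
      obtain ⟨hdD, hdn⟩ := Finset.mem_sdiff.1 hd
      have h2 : ¬ (Q * (19 / 20) < ρ d) := fun hc => hdn (Finset.mem_filter.2 ⟨hdD, hc⟩)
      push_neg at h2
      nlinarith [hρnn d]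
    have h3 : Q / 20 * ∑ d ∈ D \ Vf, ρ d ≤ ∑ d ∈ D \ Vf, ρ d * (Q - ρ d) := by
      rw [Finset.mul_sum]; exact Finset.sum_le_sum h1
    have h4 : ∑ d ∈ D \ Vf, ρ d * (Q - ρ d) ≤ ∑ d ∈ D, ρ d * (Q - ρ d) :=
      Finset.sum_le_sum_of_subset_of_nonneg (Finset.sdiff_subset) fun d hd _ => htermnn d hd
    by_contra hcon
    push_neg at hcon
    have h6 : Q / 20 * (40 * κ) < Q / 20 * ∑ d ∈ D \ Vf, ρ d :=
      mul_lt_mul_of_pos_left hcon (by positivity)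
    have h7 : Q / 20 * (40 * κ) = 2 * κ * Q := by ring
    linarith [h3, h4, hKey]
  have hinV : 1 - 40 * κ ≤ ∑ d ∈ Vf, ρ d := by
    have := Finset.sum_sdiff_eq_sub (f := ρ) hVD
    linarith [houtV, hrsum, this]
  have hinU : 1 - 4 * κ ≤ ∑ d ∈ Uf, ρ d := by
    have := Finset.sum_sdiff_eq_sub (f := ρ) hUD
    linarith [houtU, hrsum, this]
  have hUsum1 : ∑ d ∈ Uf, ρ d ≤ 1 := by
    have := Finset.sum_le_sum_of_subset_of_nonneg hUD (fun d _ _ => hρnn d)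
    linarith [hrsum]
  -- cardinality bounds
  have hVQ : 1 - 40 * κ ≤ (Vf.card : ℝ) * Q := by
    have h1 : ∑ d ∈ Vf, ρ d ≤ ∑ d ∈ Vf, Q := Finset.sum_le_sum fun d _ => hρQ d
    rw [Finset.sum_const, nsmul_eq_mul] at h1
    linarith [hinV]
  have hUQ : (Uf.card : ℝ) * Q ≤ 1 + 4 * κ := by
    have h1 : ∀ d ∈ Uf, Q / 2 * (Q - ρ d) ≤ ρ d * (Q - ρ d) := by
      intro d hd
      have h2 : Q / 2 < ρ d := (Finset.mem_filter.1 hd).2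
      nlinarith [hρQ d]
    have h3 : Q / 2 * ∑ d ∈ Uf, (Q - ρ d) ≤ ∑ d ∈ Uf, ρ d * (Q - ρ d) := by
      rw [Finset.mul_sum]; exact Finset.sum_le_sum h1
    have h4 : ∑ d ∈ Uf, ρ d * (Q - ρ d) ≤ ∑ d ∈ D, ρ d * (Q - ρ d) :=
      Finset.sum_le_sum_of_subset_of_nonneg hUD fun d hd _ => htermnn d hd
    have h5 : ∑ d ∈ Uf, (Q - ρ d) = (Uf.card : ℝ) * Q - ∑ d ∈ Uf, ρ d := by
      rw [Finset.sum_sub_distrib, Finset.sum_const, nsmul_eq_mul]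
    by_contra hcon
    push_neg at hcon
    have hY : 4 * κ < ∑ d ∈ Uf, (Q - ρ d) := by
      rw [h5]; linarith [hUsum1]
    have h6 : Q / 2 * (4 * κ) < Q / 2 * ∑ d ∈ Uf, (Q - ρ d) :=
      mul_lt_mul_of_pos_left hY (by positivity)
    have h7 : Q / 2 * (4 * κ) = 2 * κ * Q := by ring
    linarith [h3, h4, hKey]
  have hVc1 : (1:ℝ) ≤ (Vf.card : ℝ) := by
    by_contra h
    push_neg at h
    have : (Vf.card : ℝ) = 0 := by
      have := Nat.lt_one_iff.1 (by exact_mod_cast h)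
      simp [this]
    rw [this] at hVQ
    nlinarith [hκ₀, hκ]
  have hUc1 : (1:ℝ) ≤ (Uf.card : ℝ) := by
    have := Finset.card_le_card hVU
    calc (1:ℝ) ≤ (Vf.card : ℝ) := hVc1
      _ ≤ (Uf.card : ℝ) := by exact_mod_cast this
  have hUne : Uf.Nonempty := by
    rw [← Finset.card_pos]
    have : (1:ℕ) ≤ Uf.card := by exact_mod_cast hUc1
    omega
  -- closure property
  have hclose : ∀ u1 ∈ Vf, ∀ u2 ∈ Vf, ∀ u3 ∈ Vf, u1 + u2 - u3 ∈ Uf := by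
    intro u1 h1 u2 h2 u3 h3
    have r1 : Q * (19/20) < ρ u1 := (Finset.mem_filter.1 h1).2
    have r2 : Q * (19/20) < ρ u2 := (Finset.mem_filter.1 h2).2
    have r3 : Q * (19/20) < ρ u3 := (Finset.mem_filter.1 h3).2
    have d1 : Δ u1 < Q / 10 := by rw [hΔρ]; linarith
    have d2 : Δ u2 < Q / 10 := by rw [hΔρ]; linarith
    have d3 : Δ u3 < Q / 10 := by rw [hΔρ]; linarith
    have e1 : u1 + u2 - u3 = (u1 + u2) + (-u3) := by abel
    have hle : Δ (u1 + u2 - u3) < Q := by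
      rw [e1]
      calc Δ ((u1 + u2) + (-u3)) ≤ 2 * Δ (u1 + u2) + 2 * Δ (-u3) := hΔsub _ _
        _ ≤ 2 * (2 * Δ u1 + 2 * Δ u2) + 2 * Δ u3 := by
            rw [hΔneg]
            have := hΔsub u1 u2
            linarith
        _ < Q := by linarith
    have hρ4 : Q / 2 < ρ (u1 + u2 - u3) := by
      have := hΔρ (u1 + u2 - u3)
      linarith
    have hpos : 0 < ρ (u1 + u2 - u3) := by linarith [hQpos]
    exact Finset.mem_filter.2 ⟨hρD _ hpos.ne', hρ4⟩
  -- energy lower bound (combinatorial)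
  have hEnergy : Vf.card ^ 3 ≤ addEnergySet (↑Uf : Set G) := by
    set A : Set ((G × G) × G × G) :=
      {p | p.1.1 ∈ (↑Uf : Set G) ∧ p.1.2 ∈ (↑Uf : Set G) ∧ p.2.1 ∈ (↑Uf : Set G) ∧
        p.2.2 ∈ (↑Uf : Set G) ∧ p.1.1 + p.1.2 = p.2.1 + p.2.2} with hAdef
    have hcard : addEnergySet (↑Uf : Set G) = A.ncard := by
      rw [← Nat.card_coe_set_eq]
      rfl
    have hAfin : A.Finite := by
      apply Set.Finite.subset
        (((Uf.finite_toSet.prod Uf.finite_toSet)).prod (Uf.finite_toSet.prod Uf.finite_toSet))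
      rintro ⟨⟨a, b⟩, c, d⟩ ⟨h1, h2, h3, h4, _⟩
      exact ⟨⟨h1, h2⟩, h3, h4⟩
    set B : Set (G × G × G) := ↑(Vf ×ˢ Vf ×ˢ Vf) with hBdef
    set f : G × G × G → (G × G) × G × G :=
      fun q => ((q.1, q.2.1), (q.2.2, q.1 + q.2.1 - q.2.2)) with hfdef
    have hmemB : ∀ q : G × G × G, q ∈ B → q.1 ∈ Vf ∧ q.2.1 ∈ Vf ∧ q.2.2 ∈ Vf := by
      intro q hq
      rw [hBdef, Finset.mem_coe, Finset.mem_product, Finset.mem_product] at hq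
      exact ⟨hq.1, hq.2.1, hq.2.2⟩
    have hmaps : ∀ q ∈ B, f q ∈ A := by
      intro q hq
      obtain ⟨h1, h2, h3⟩ := hmemB q hq
      refine ⟨?_, ?_, ?_, ?_, ?_⟩
      · exact Finset.mem_coe.2 (hVU h1)
      · exact Finset.mem_coe.2 (hVU h2)
      · exact Finset.mem_coe.2 (hVU h3)
      · exact Finset.mem_coe.2 (hclose _ h1 _ h2 _ h3)
      · show q.1 + q.2.1 = q.2.2 + (q.1 + q.2.1 - q.2.2)
        abel
    have hinj : Set.InjOn f B := by
      intro q hq q' hq' h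
      have e1 : q.1 = q'.1 := congrArg (fun p => p.1.1) h
      have e2 : q.2.1 = q'.2.1 := congrArg (fun p => p.1.2) h
      have e3 : q.2.2 = q'.2.2 := congrArg (fun p => p.2.1) h
      exact Prod.ext e1 (Prod.ext e2 e3)
    have hle : B.ncard ≤ A.ncard := Set.ncard_le_ncard_of_injOn f hmaps hinj hAfin
    have hBcard : B.ncard = Vf.card ^ 3 := by
      rw [hBdef, Set.ncard_coe_finset, Finset.card_product, Finset.card_product]
      ring
    rw [hcard, ← hBcard]
    exact hle
  -- choice of translate z
  have hzex : ∃ z : G, 1 - 4 * κ ≤ ∑ x ∈ Uf, μ (x + z) := by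
    by_contra hcon
    push_neg at hcon
    have hswap : ∑ z ∈ S, μ z * ∑ x ∈ Uf, μ (x + z) = ∑ d ∈ Uf, ρ d := by
      calc ∑ z ∈ S, μ z * ∑ x ∈ Uf, μ (x + z)
          = ∑ z ∈ S, ∑ x ∈ Uf, μ z * μ (x + z) :=
            Finset.sum_congr rfl fun z _ => by rw [Finset.mul_sum]
        _ = ∑ x ∈ Uf, ∑ z ∈ S, μ z * μ (x + z) := Finset.sum_comm
        _ = ∑ d ∈ Uf, ρ d := by
            refine Finset.sum_congr rfl fun x _ => ?_
            rw [hρS x]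
            exact Finset.sum_congr rfl fun w _ => by rw [add_comm x w]
    have hlt : ∑ z ∈ S, μ z * ∑ x ∈ Uf, μ (x + z) < ∑ z ∈ S, μ z * (1 - 4 * κ) := by
      apply Finset.sum_lt_sum_of_nonempty hSne
      intro w hw
      have hμw : 0 < μ w :=
        lt_of_le_of_ne (hnn w) (Ne.symm (hfin.mem_toFinset.1 hw))
      exact mul_lt_mul_of_pos_left (hcon w) hμw
    rw [hswap, ← Finset.sum_mul, hsumS, one_mul] at hlt
    linarith [hinU]
  obtain ⟨z, hz⟩ := hzex
  -- numerics with t = κ^(1/6)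
  set t : ℝ := κ ^ ((1:ℝ)/6) with htdef
  have ht0 : 0 < t := Real.rpow_pos_of_pos hκ _
  have ht6 : t ^ (6:ℕ) = κ := by
    rw [htdef, ← Real.rpow_natCast (κ ^ ((1:ℝ)/6)) 6, ← Real.rpow_mul hκ.le]
    norm_num
  have ht3 : t < 1/3 := by
    by_contra h
    push_neg at h
    have h2 := pow_le_pow_left₀ (by norm_num : (0:ℝ) ≤ 1/3) h 6
    rw [ht6] at h2
    norm_num at h2
    linarith [hκ₀]
  have ht1 : t ≤ 1 := by linarith
  have ht2 : κ ^ ((1:ℝ)/3) = t ^ (2:ℕ) := by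
    rw [htdef, ← Real.rpow_natCast (κ ^ ((1:ℝ)/6)) 2, ← Real.rpow_mul hκ.le]
    norm_num
  set C : ℝ := (Uf.card : ℝ) with hCdef
  have hC0 : (0:ℝ) < C := by rw [hCdef]; linarith [hUc1]
  -- the ambient finset for the ℓ¹ estimate
  set W : Finset G := Uf ∪ S.image (fun s => s - z) with hWdef
  have hUW : Uf ⊆ W := Finset.subset_union_left
  have hsupW : ∀ x : G, μ (x + z) ≠ 0 → x ∈ W := fun x hx =>
    Finset.mem_union_right _ (Finset.mem_image.2 ⟨x + z, hSmem hx, by abel⟩)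
  have hWT : ∑ x ∈ W, μ (x + z) = 1 := by
    have h1 : support (fun x => μ (x + z)) ⊆ ↑W := fun x hx => Finset.mem_coe.2 (hsupW x hx)
    rw [← finsum_eq_sum_of_support_subset _ h1, finsum_translate μ z, hsum]
  have hWQ : ∑ x ∈ W, μ (x + z) ^ 2 = Q := by
    have h1 : support (fun x => μ (x + z) ^ 2) ⊆ ↑W := by
      intro x hx
      refine Finset.mem_coe.2 (hsupW x ?_)
      simpa [pow_eq_zero_iff] using hx
    rw [← finsum_eq_sum_of_support_subset _ h1, hQdef]
    exact finsum_translate (fun x => μ x ^ 2) z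
  have hAz1 : ∑ x ∈ Uf, μ (x + z) ≤ 1 := by
    rw [← hWT]
    exact Finset.sum_le_sum_of_subset_of_nonneg hUW fun i _ _ => hnn _
  refine ⟨z, (↑Uf : Set G), Uf.finite_toSet, Finset.coe_nonempty.2 hUne, ?_, ?_, ?_⟩
  · -- ℓ¹ closeness
    simp only [Set.ncard_coe_finset]
    have hsupp1 : support
        (fun x => |μ (x + z) - Set.indicator (↑Uf : Set G) (fun _ => 1 / C) x|) ⊆ ↑W := by
      intro x hx
      by_cases hxU : x ∈ Uf
      · exact Finset.mem_coe.2 (hUW hxU)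
      · refine Finset.mem_coe.2 (hsupW x ?_)
        intro h0
        apply hx
        show |μ (x + z) - Set.indicator (↑Uf : Set G) (fun _ => 1 / C) x| = 0
        rw [Set.indicator_of_notMem (by simpa using hxU), h0]
        simp
    have hsplit : (∑ᶠ x, |μ (x + z) - Set.indicator (↑Uf : Set G) (fun _ => 1 / C) x|)
        = (∑ x ∈ W \ Uf, |μ (x + z) - Set.indicator (↑Uf : Set G) (fun _ => 1 / C) x|)
          + ∑ x ∈ Uf, |μ (x + z) - Set.indicator (↑Uf : Set G) (fun _ => 1 / C) x| := by
      rw [finsum_eq_sum_of_support_subset _ hsupp1, ← Finset.sum_sdiff hUW]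
    have hoff : ∑ x ∈ W \ Uf, |μ (x + z) - Set.indicator (↑Uf : Set G) (fun _ => 1 / C) x|
        ≤ 4 * κ := by
      have he : ∀ x ∈ W \ Uf,
          |μ (x + z) - Set.indicator (↑Uf : Set G) (fun _ => 1 / C) x| = μ (x + z) := by
        intro x hx
        have hxn : x ∉ Uf := (Finset.mem_sdiff.1 hx).2
        rw [Set.indicator_of_notMem (by simpa using hxn), sub_zero, abs_of_nonneg (hnn _)]
      rw [Finset.sum_congr rfl he]
      have h2 : ∑ x ∈ W \ Uf, μ (x + z) + ∑ x ∈ Uf, μ (x + z) = ∑ x ∈ W, μ (x + z) :=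
        Finset.sum_sdiff hUW
      linarith [hz, hWT]
    have hon : ∑ x ∈ Uf, |μ (x + z) - Set.indicator (↑Uf : Set G) (fun _ => 1 / C) x|
        ≤ 4 * t ^ 3 := by
      have he : ∀ x ∈ Uf,
          |μ (x + z) - Set.indicator (↑Uf : Set G) (fun _ => 1 / C) x|
            = |μ (x + z) - 1 / C| := by
        intro x hx
        rw [Set.indicator_of_mem (by simpa using hx)]
      rw [Finset.sum_congr rfl he]
      have hexp : ∑ x ∈ Uf, (μ (x + z) - 1 / C) ^ 2
          = (∑ x ∈ Uf, μ (x + z) ^ 2) - 2 * (1 / C) * (∑ x ∈ Uf, μ (x + z))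
            + C * (1 / C) ^ 2 := by
        have e1 : ∀ x ∈ Uf, (μ (x + z) - 1 / C) ^ 2
            = μ (x + z) ^ 2 - 2 * (1 / C) * μ (x + z) + (1 / C) ^ 2 :=
          fun x _ => by ring
        rw [Finset.sum_congr rfl e1, Finset.sum_add_distrib, Finset.sum_sub_distrib,
          Finset.mul_sum, Finset.sum_const, nsmul_eq_mul, ← hCdef]
      have hQsub : ∑ x ∈ Uf, μ (x + z) ^ 2 ≤ Q := by
        rw [← hWQ]
        exact Finset.sum_le_sum_of_subset_of_nonneg hUW fun i _ _ => sq_nonneg _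
      have hCSq : C * (∑ x ∈ Uf, (μ (x + z) - 1 / C) ^ 2) ≤ 12 * κ := by
        have e2 : C * (∑ x ∈ Uf, (μ (x + z) - 1 / C) ^ 2)
            = C * (∑ x ∈ Uf, μ (x + z) ^ 2) - 2 * (∑ x ∈ Uf, μ (x + z)) + 1 := by
          rw [hexp]
          field_simp
        have e3 : C * (∑ x ∈ Uf, μ (x + z) ^ 2) ≤ 1 + 4 * κ :=
          le_trans (mul_le_mul_of_nonneg_left hQsub hC0.le) (by rw [hCdef]; exact hUQ)
        rw [e2]
        linarith [hz]
      have hCS := Finset.sum_mul_sq_le_sq_mul_sq Uf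
        (fun x => |μ (x + z) - 1 / C|) (fun _ => (1:ℝ))
      have hP12 : (∑ x ∈ Uf, |μ (x + z) - 1 / C|) ^ 2 ≤ 12 * κ := by
        have e4 : ∑ x ∈ Uf, |μ (x + z) - 1 / C| * 1 = ∑ x ∈ Uf, |μ (x + z) - 1 / C| := by
          simp
        have e5 : ∑ x ∈ Uf, |μ (x + z) - 1 / C| ^ 2 = ∑ x ∈ Uf, (μ (x + z) - 1 / C) ^ 2 :=
          Finset.sum_congr rfl fun x _ => sq_abs _
        have e6 : ∑ _x ∈ Uf, ((1:ℝ)) ^ 2 = C := by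
          simp [hCdef]
        rw [e4, e5, e6] at hCS
        calc (∑ x ∈ Uf, |μ (x + z) - 1 / C|) ^ 2
            ≤ (∑ x ∈ Uf, (μ (x + z) - 1 / C) ^ 2) * C := hCS
          _ ≤ 12 * κ := by
              rw [mul_comm]
              exact hCSq
      have hP1nn : 0 ≤ ∑ x ∈ Uf, |μ (x + z) - 1 / C| :=
        Finset.sum_nonneg fun x _ => abs_nonneg _
      exact aux_P1 hκ ht0 ht6 hP1nn hP12
    have hnum : 4 * κ + 4 * t ^ 3 < 6 * t := aux_num1 hκ ht0 ht6 ht3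
    rw [hsplit]
    calc (∑ x ∈ W \ Uf, |μ (x + z) - Set.indicator (↑Uf : Set G) (fun _ => 1 / C) x|)
          + ∑ x ∈ Uf, |μ (x + z) - Set.indicator (↑Uf : Set G) (fun _ => 1 / C) x|
        ≤ 4 * κ + 4 * t ^ 3 := add_le_add hoff hon
      _ < 6 * t := hnum
  · -- ℓ² bound
    simp only [Set.ncard_coe_finset]
    rw [hl2μ, ht2, lt_div_iff₀ (Real.sqrt_pos.2 hC0)]
    have h1 : Real.sqrt Q * Real.sqrt C = Real.sqrt (Q * C) := (Real.sqrt_mul hQpos.le C).symm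
    have h2 : Q * C ≤ 1 + 4 * κ := by rw [mul_comm]; rw [hCdef]; exact hUQ
    have h3 : Real.sqrt (Q * C) ≤ 1 + 2 * κ := by
      calc Real.sqrt (Q * C) ≤ Real.sqrt ((1 + 2 * κ) ^ 2) :=
            Real.sqrt_le_sqrt (by nlinarith [sq_nonneg κ])
        _ = 1 + 2 * κ := Real.sqrt_sq (by linarith)
    have h4 : 2 * κ < 4 * t ^ 2 := aux_num2 hκ ht0 ht6 ht1
    rw [h1]
    linarith
  · -- energy bound
    simp only [Set.ncard_coe_finset]
    have hEc : ((Vf.card : ℝ)) ^ 3 ≤ (addEnergySet (↑Uf : Set G) : ℝ) := by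
      have := hEnergy
      exact_mod_cast Nat.cast_le.2 this
    set Vc : ℝ := (Vf.card : ℝ) with hVcdef
    rw [gt_iff_lt, ← hCdef]
    by_cases hsign : 1 - 40 * t ≤ 0
    · have hVc3 : (1:ℝ) ≤ Vc ^ 3 := by
        calc (1:ℝ) = 1 ^ 3 := by norm_num
          _ ≤ Vc ^ 3 := pow_le_pow_left₀ (by norm_num) hVc1 3
      have hneg : (1 - 40 * t) * C ^ 3 ≤ 0 :=
        mul_nonpos_of_nonpos_of_nonneg hsign (by positivity)
      linarith [hEc]
    · push_neg at hsign
      have h40 : t < 1 / 40 := by linarith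
      have hCQ3 : (C * Q) ^ 3 ≤ (1 + 4 * κ) ^ 3 :=
        pow_le_pow_left₀ (mul_nonneg hC0.le hQpos.le) (by rw [hCdef]; exact hUQ) 3
      have hVQ3 : (1 - 40 * κ) ^ 3 ≤ (Vc * Q) ^ 3 :=
        pow_le_pow_left₀ (by linarith [hκ₀]) (by rw [hVcdef]; exact hVQ) 3
      have hQ3 : (0:ℝ) < Q ^ 3 := by positivity
      have hscal : (1 - 40 * t) * (1 + 4 * κ) ^ 3 < (1 - 40 * κ) ^ 3 :=
        aux_scal hκ hκ₀ ht0 ht6 hsign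
      have hmain : ((1 - 40 * t) * C ^ 3) * Q ^ 3 < (Vc ^ 3) * Q ^ 3 := by
        calc ((1 - 40 * t) * C ^ 3) * Q ^ 3 = (1 - 40 * t) * (C * Q) ^ 3 := by ring
          _ ≤ (1 - 40 * t) * (1 + 4 * κ) ^ 3 := mul_le_mul_of_nonneg_left hCQ3 hsign.le
          _ < (1 - 40 * κ) ^ 3 := hscal
          _ ≤ (Vc * Q) ^ 3 := hVQ3
          _ = (Vc ^ 3) * Q ^ 3 := by ring
      have hfin2 : (1 - 40 * t) * C ^ 3 < Vc ^ 3 :=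
        lt_of_mul_lt_mul_right hmain hQ3.le
      linarith [hEc]
end

section
/- There exists an absolute constant κ₀ > 0 such that the following holds for all 0 < κ < κ₀. Let G be an abelian group and let U be a finite nonempty subset of G whose additive energy satisfies E(U) ≥ (1 − 40·κ^{1/6})·|U|³. Then there exist a finite subgroup H of G and an element z ∈ G such that |U △ (H − z)| < 1000·κ^{1/12}·|U|. -/
open Finset
open scoped Pointwise Combinatorics.Additive

lemma Finset.card_symmDiff_add_card_le {α : Type*} [DecidableEq α] {A B X : Finset α}
    (hBA : B ⊆ A) (hBX : B ⊆ X) :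
    #(symmDiff A X) + #B ≤ #(A \ B) + #X := by
  have h₁ : #(A \ X) ≤ #(A \ B) := card_le_card (sdiff_subset_sdiff subset_rfl hBX)
  have h₂ : #(X \ A) ≤ #(X \ B) := card_le_card (sdiff_subset_sdiff subset_rfl hBA)
  have h₃ := card_sdiff_add_card_eq_card hBX
  have h₄ := card_union_le (A \ X) (X \ A)
  rw [symmDiff_def, sup_eq_union]
  omega

namespace Finset

variable {G : Type*} [AddCommGroup G] [DecidableEq G]

def diffRep (A : Finset G) (d : G) : ℕ := #{a ∈ A | a - d ∈ A}

variable {A B : Finset G}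

lemma diffRep_le_card (d : G) : diffRep A d ≤ #A := card_filter_le _ _

lemma diffRep_add_diffRep_le (d₁ d₂ : G) :
    diffRep A d₁ + diffRep A d₂ ≤ diffRep A (d₁ - d₂) + #A := by
  have hinter : #({a ∈ A | a - d₁ ∈ A} ∩ {a ∈ A | a - d₂ ∈ A}) ≤ diffRep A (d₁ - d₂) :=
    card_le_card_of_injOn (· - d₂) (fun a ha => by
      simp only [mem_coe, mem_inter, mem_filter] at ha ⊢
      exact ⟨ha.2.2, by rw [sub_sub_sub_cancel_right]; exact ha.1.2⟩)
      (fun a _ b _ h => sub_left_injective h)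
  have hunion : #({a ∈ A | a - d₁ ∈ A} ∪ {a ∈ A | a - d₂ ∈ A}) ≤ #A :=
    card_le_card (union_subset (filter_subset _ _) (filter_subset _ _))
  rw [diffRep, diffRep, ← card_union_add_card_inter]
  omega

lemma sum_diffRep_le (t : Finset G) : ∑ d ∈ t, diffRep A d ≤ #A ^ 2 :=
  calc ∑ d ∈ t, diffRep A d = ∑ a ∈ A, #{d ∈ t | a - d ∈ A} := by
        simp only [diffRep, card_filter]; exact sum_comm
    _ ≤ ∑ _a ∈ A, #A := sum_le_sum fun a _ =>
        card_le_card_of_injOn (a - ·) (fun d hd => (mem_filter.mp hd).2)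
          (fun _ _ _ _ h => sub_right_injective h)
    _ = #A ^ 2 := by rw [sum_const, smul_eq_mul, sq]

lemma diffRep_le_diffRep_add_card_sdiff (d : G) :
    diffRep A d ≤ diffRep B d + 2 * #(A \ B) := by
  have h₁ : #{a ∈ A | a - d ∈ A ∧ a ∉ B} ≤ #(A \ B) :=
    card_le_card fun a ha => by simp only [mem_filter, mem_sdiff] at ha ⊢; exact ⟨ha.1, ha.2.2⟩
  have h₂ : #{a ∈ A | a - d ∈ A ∧ a - d ∉ B} ≤ #(A \ B) :=
    card_le_card_of_injOn (· - d) (fun a ha => by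
      simp only [mem_coe, mem_filter, mem_sdiff] at ha ⊢
      exact ha.2) (fun _ _ _ _ h => sub_left_injective h)
  have hsub : {a ∈ A | a - d ∈ A} ⊆
      {a ∈ B | a - d ∈ B} ∪ {a ∈ A | a - d ∈ A ∧ a ∉ B} ∪ {a ∈ A | a - d ∈ A ∧ a - d ∉ B} := by
    intro a
    simp only [mem_filter, mem_union]
    tauto
  have := (card_le_card hsub).trans ((card_union_le _ _).trans
    (Nat.add_le_add_right (card_union_le _ _) _))
  rw [diffRep, diffRep]
  omega

lemma addEnergy_eq_sum_diffRep (A : Finset G) :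
    E[A] = ∑ a ∈ A, ∑ b ∈ A, diffRep A (a - b) := by
  rw [addEnergy, card_filter, sum_product, ← sum_product' (f := fun a b => diffRep A (a - b))]
  refine sum_congr rfl fun p _ => ?_
  rw [← card_filter]
  have sub_eq_fst {q : G × G} (hq : p.1 + q.1 = p.2 + q.2) : q.2 - (p.1 - p.2) = q.1 := by
    rw [sub_eq_iff_eq_add, ← sub_eq_iff_eq_add', sub_eq_sub_iff_add_eq_add, add_comm, hq]
  exact card_nbij' (fun q => q.2) (fun c => (c - (p.1 - p.2), c))
    (fun q hq => by
      simp only [mem_coe, mem_filter, mem_product] at hq ⊢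
      exact ⟨hq.1.2, sub_eq_fst hq.2 ▸ hq.1.1⟩)
    (fun c hc => by
      simp only [mem_coe, mem_filter, mem_product] at hc ⊢
      exact ⟨hc.symm, by abel⟩)
    (fun q hq => by
      simp only [mem_coe, mem_filter, mem_product] at hq
      exact Prod.ext (sub_eq_fst hq.2) rfl)
    (fun c _ => rfl)

lemma sum_diffRep_add_sum_diffRep_le (a₁ a₂ : G) :
    ∑ b ∈ A, diffRep A (a₁ - b) + ∑ b ∈ A, diffRep A (a₂ - b) ≤
      #A * diffRep A (a₁ - a₂) + #A ^ 2 := by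
  rw [← sum_add_distrib, sq, ← mul_add, ← smul_eq_mul, ← sum_const]
  refine sum_le_sum fun b _ => ?_
  simpa only [sub_sub_sub_cancel_right] using diffRep_add_diffRep_le (A := A) (a₁ - b) (a₂ - b)

lemma exists_addSubgroup_coe_eq_sub (hB : B.Nonempty)
    (h : ∀ d ∈ B - B, #B < 2 * diffRep B d) : ∃ H : AddSubgroup G, (H : Set G) = ↑(B - B) := by
  have neg_mem {d : G} (hd : d ∈ B - B) : -d ∈ B - B := by
    obtain ⟨x, hx, y, hy, rfl⟩ := mem_sub.mp hd
    exact neg_sub x y ▸ sub_mem_sub hy hx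
  refine ⟨{ carrier := ↑(B - B)
            add_mem' := ?_
            zero_mem' := ?_
            neg_mem' := neg_mem }, rfl⟩
  · intro d₁ d₂ hd₁ hd₂
    have h₁ := h d₁ hd₁
    have h₂ := h (-d₂) (neg_mem hd₂)
    obtain ⟨a, ha⟩ := inter_nonempty_of_card_lt_card_add_card
      (filter_subset (· - d₁ ∈ B) B) (filter_subset (· - -d₂ ∈ B) B)
      (by rw [diffRep] at h₁ h₂; omega)
    simp only [mem_inter, mem_filter] at ha
    have : d₁ + d₂ = a - -d₂ - (a - d₁) := by abel
    exact this ▸ sub_mem_sub ha.2.2 ha.1.2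
  · obtain ⟨b, hb⟩ := hB
    exact mem_coe.mpr (sub_self b ▸ sub_mem_sub hb hb)

lemma exists_subset_card_sdiff_le_and_le_diffRep (hA : A.Nonempty) {ε : ℝ} (hε : 0 < ε)
    (hE : (1 - ε ^ 2) * #A ^ 3 ≤ E[A]) :
    ∃ B ⊆ A, #(A \ B) ≤ ε * #A ∧ ∀ a₁ ∈ B, ∀ a₂ ∈ B, (1 - 2 * ε) * #A ≤ diffRep A (a₁ - a₂) := by
  set n : ℝ := (#A : ℝ)
  have hn : 0 < n := Nat.cast_pos.mpr hA.card_pos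
  set s : G → ℝ := fun a => ∑ b ∈ A, (diffRep A (a - b) : ℝ)
  have hs_le (a : G) : s a ≤ n ^ 2 := by
    have : ∑ b ∈ A, diffRep A (a - b) ≤ #A ^ 2 :=
      (sum_le_card_nsmul _ _ _ fun b _ => diffRep_le_card _).trans_eq (by rw [smul_eq_mul, sq])
    simp only [s, n]
    exact_mod_cast this
  have hs_sum : ∑ a ∈ A, s a = E[A] := by
    simp only [s, addEnergy_eq_sum_diffRep, Nat.cast_sum]
  refine ⟨{a ∈ A | (1 - ε) * n ^ 2 ≤ s a}, filter_subset _ _, ?_, fun a₁ ha₁ a₂ ha₂ => ?_⟩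
  · have hpos : 0 < ε * n ^ 2 := by positivity
    refine le_of_mul_le_mul_right ?_ hpos
    calc #(A \ {a ∈ A | (1 - ε) * n ^ 2 ≤ s a}) * (ε * n ^ 2)
        ≤ ∑ a ∈ A \ {a ∈ A | (1 - ε) * n ^ 2 ≤ s a}, (n ^ 2 - s a) := by
          rw [← nsmul_eq_mul]
          refine card_nsmul_le_sum _ _ _ fun a ha => ?_
          simp only [mem_sdiff, mem_filter, not_and, not_le] at ha
          linarith [ha.2 ha.1]
      _ ≤ ∑ a ∈ A, (n ^ 2 - s a) :=
          sum_le_sum_of_subset_of_nonneg sdiff_subset fun a _ _ => sub_nonneg.mpr (hs_le a)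
      _ = n ^ 3 - E[A] := by rw [sum_sub_distrib, hs_sum, sum_const, nsmul_eq_mul]; ring
      _ ≤ ε * n * (ε * n ^ 2) := by linarith
  · simp only [mem_filter] at ha₁ ha₂
    have h := sum_diffRep_add_sum_diffRep_le (A := A) a₁ a₂
    have h' : s a₁ + s a₂ ≤ n * diffRep A (a₁ - a₂) + n ^ 2 := by
      simp only [s, n]
      exact_mod_cast h
    refine le_of_mul_le_mul_left ?_ hn
    nlinarith

theorem exists_addSubgroup_card_symmDiff_vadd_le (hA : A.Nonempty) {ε : ℝ} (hε₀ : 0 < ε)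
    (hε : ε < 1 / 8) (hE : (1 - ε ^ 2) * #A ^ 3 ≤ E[A]) :
    ∃ (H : AddSubgroup G) (K : Finset G), (H : Set G) = K ∧
      ∃ x : G, #(symmDiff A (x +ᵥ K)) ≤ 6 * ε * #A := by
  obtain ⟨B, hBA, hAB, hpopular⟩ := exists_subset_card_sdiff_le_and_le_diffRep hA hε₀ hE
  set n : ℝ := (#A : ℝ)
  have hn : 0 < n := Nat.cast_pos.mpr hA.card_pos
  have hBn : (#B : ℝ) ≤ n := by simp only [n]; exact_mod_cast card_le_card hBA
  have hnB : n ≤ #(A \ B) + #B := by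
    simp only [n]; exact_mod_cast (card_sdiff_add_card_eq_card hBA).ge
  have hB : B.Nonempty := by
    rw [← card_pos, ← Nat.cast_pos (α := ℝ)]
    nlinarith
  have hD (d : G) (hd : d ∈ B - B) : (1 - 2 * ε) * n ≤ diffRep A d := by
    obtain ⟨a₁, ha₁, a₂, ha₂, rfl⟩ := mem_sub.mp hd
    exact hpopular a₁ ha₁ a₂ ha₂
  have hDcard : #(B - B) * ((1 - 2 * ε) * n) ≤ n ^ 2 :=
    calc #(B - B) * ((1 - 2 * ε) * n) ≤ ∑ d ∈ B - B, (diffRep A d : ℝ) := by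
          rw [← nsmul_eq_mul]; exact card_nsmul_le_sum _ _ _ hD
      _ ≤ n ^ 2 := by simp only [n]; exact_mod_cast sum_diffRep_le (B - B)
  obtain ⟨H, hH⟩ := exists_addSubgroup_coe_eq_sub hB fun d hd => by
    have h : (diffRep A d : ℝ) ≤ diffRep B d + 2 * #(A \ B) := by
      exact_mod_cast diffRep_le_diffRep_add_card_sdiff d
    have : (#B : ℝ) < 2 * diffRep B d := by
      nlinarith [hD d hd, mul_pos (by linarith : (0 : ℝ) < 1 - 8 * ε) hn]
    exact_mod_cast this
  obtain ⟨b, hb⟩ := hB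
  refine ⟨H, B - B, hH, b, ?_⟩
  have hBX : B ⊆ b +ᵥ (B - B) := fun a ha =>
    mem_vadd_finset.mpr ⟨a - b, sub_mem_sub ha hb, add_sub_cancel b a⟩
  have hX : (#(b +ᵥ (B - B)) : ℝ) ≤ #(B - B) := by
    exact_mod_cast card_vadd_finset_le (a := b) (s := B - B)
  have hΔ : (#(symmDiff A (b +ᵥ (B - B))) : ℝ) + #B ≤ #(A \ B) + #(b +ᵥ (B - B)) := by
    exact_mod_cast card_symmDiff_add_card_le hBA hBX
  have hDn : (#(B - B) : ℝ) * (1 - 2 * ε) ≤ n := le_of_mul_le_mul_right (by nlinarith) hn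
  nlinarith

end Finset

lemma addEnergySet_coe {G : Type*} [AddCommGroup G] [DecidableEq G] (A : Finset G) :
    addEnergySet (A : Set G) = E[A] := by
  rw [addEnergySet, addEnergy_eq_card_filter, ← Nat.card_eq_finsetCard]
  exact Nat.card_congr (Equiv.subtypeEquivRight fun p => by simp [and_assoc])

theorem stmt3 :
    ∃ κ₀ : ℝ, 0 < κ₀ ∧
    ∀ (G : Type) [AddCommGroup G] (κ : ℝ) (U : Set G),
      0 < κ → κ < κ₀ → U.Finite → U.Nonempty →
      (1 - 40 * κ ^ ((1 : ℝ) / 6)) * (U.ncard : ℝ) ^ 3 ≤ (addEnergySet U : ℝ) →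
      ∃ (H : AddSubgroup G) (z : G), (H : Set G).Finite ∧
        ((symmDiff U ((fun h => h - z) '' (H : Set G))).ncard : ℝ)
          < 1000 * κ ^ ((1 : ℝ) / 12) * (U.ncard : ℝ) := by
  -- The proof runs with `ε = 7 κ^(1/12)`: then `ε² ≥ 40 κ^(1/6)`, `ε < 1/8` as `κ < 56⁻¹²`,
  -- and `6 ε < 1000 κ^(1/12)`.
  refine ⟨(1 / 56) ^ 12, by positivity, fun G _ κ U hκ hκ₀ hU hU₀ hE => ?_⟩
  classical
  obtain ⟨A, rfl⟩ := hU.exists_finset_coe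
  have hA : A.Nonempty := coe_nonempty.mp hU₀
  have hn : (0 : ℝ) < #A := Nat.cast_pos.mpr hA.card_pos
  rw [Set.ncard_coe_finset, addEnergySet_coe] at hE
  rw [Set.ncard_coe_finset]
  set t := κ ^ ((1 : ℝ) / 12)
  have ht : 0 < t := by positivity
  have hκt : κ = t ^ 12 := by
    rw [← Real.rpow_natCast, ← Real.rpow_mul hκ.le]; norm_num
  have hκt' : κ ^ ((1 : ℝ) / 6) = t ^ 2 := by
    rw [← Real.rpow_natCast, ← Real.rpow_mul hκ.le]; norm_num
  have ht56 : t < 1 / 56 := by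
    rw [hκt] at hκ₀; exact (pow_lt_pow_iff_left₀ ht.le (by norm_num) (by norm_num)).mp hκ₀
  have hE' : (1 - (7 * t) ^ 2) * (#A : ℝ) ^ 3 ≤ E[A] :=
    hE.trans' (mul_le_mul_of_nonneg_right (by rw [hκt']; nlinarith) (pow_nonneg hn.le 3))
  obtain ⟨H, K, hHK, x, hx⟩ :=
    exists_addSubgroup_card_symmDiff_vadd_le hA (by positivity) (by linarith) hE'
  refine ⟨H, -x, hHK ▸ K.finite_toSet, ?_⟩
  have hcoset : (fun h => h - -x) '' (H : Set G) = ↑(x +ᵥ K) := by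
    rw [hHK, coe_vadd_finset, ← Set.image_vadd]
    congr 1
    funext h
    exact (sub_neg_eq_add h x).trans (add_comm h x)
  rw [hcoset, ← coe_symmDiff, Set.ncard_coe_finset]
  nlinarith
end

section
/- Let G be a finite abelian group of order h', let S ⊆ G be nonempty with |S| ≤ h'/2, and let 0 < ε < 1. Then #{x ∈ G : |S ∪ (S + x)| < (2 − ε)·|S|} < |S|/ε. -/
theorem stmt4 (G : Type) [AddCommGroup G] [Fintype G] [DecidableEq G]
    (S : Finset G) (hS : S.Nonempty) (hS2 : (S.card : ℝ) ≤ (Fintype.card G : ℝ) / 2)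
    (ε : ℝ) (hε : 0 < ε) (hε1 : ε < 1) :
    (({x : G | ((S ∪ S.image (· + x)).card : ℝ) < (2 - ε) * S.card} : Set G).ncard : ℝ)
      < (S.card : ℝ) / ε := by
  classical
  set P : G → Prop := fun x => ((S ∪ S.image (· + x)).card : ℝ) < (2 - ε) * S.card with hP
  set T : Finset G := Finset.univ.filter P with hT
  have hset : ({x : G | P x} : Set G) = ↑T := by
    ext x; simp [hT]
  have hnc : ({x : G | P x} : Set G).ncard = T.card := by
    rw [hset, Set.ncard_coe_finset]
  rw [hnc]
  have hk : (0 : ℝ) < S.card := by exact_mod_cast Finset.card_pos.mpr hS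
  -- image card
  have himg : ∀ x : G, (S.image (· + x)).card = S.card := by
    intro x
    exact Finset.card_image_of_injective S (add_left_injective x)
  -- intersection description
  have hinterdesc : ∀ x : G, S ∩ S.image (· + x) = S.filter (fun a => a - x ∈ S) := by
    intro x
    ext a
    simp only [Finset.mem_inter, Finset.mem_image, Finset.mem_filter]
    constructor
    · rintro ⟨ha, b, hb, rfl⟩
      exact ⟨ha, by simpa using hb⟩
    · rintro ⟨ha, hb⟩
      exact ⟨ha, a - x, hb, by abel⟩
  -- sum identity
  have hsum : ∑ x : G, ((S ∩ S.image (· + x)).card) = S.card * S.card := by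
    have h1 : ∀ x : G, (S ∩ S.image (· + x)).card = ∑ a ∈ S, if a - x ∈ S then 1 else 0 := by
      intro x
      rw [hinterdesc x, Finset.card_filter]
    simp_rw [h1]
    rw [Finset.sum_comm]
    have h2 : ∀ a : G, (∑ x : G, if a - x ∈ S then 1 else 0) = S.card := by
      intro a
      rw [← Finset.card_filter]
      have : Finset.univ.filter (fun x => a - x ∈ S) = S.image (fun s => a - s) := by
        ext x
        simp only [Finset.mem_filter, Finset.mem_univ, true_and, Finset.mem_image]
        constructor
        · intro h; exact ⟨a - x, h, by abel⟩
        · rintro ⟨s, hs, rfl⟩; simpa using hs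
      rw [this, Finset.card_image_of_injective]
      intro u v h
      exact sub_right_injective h
    simp_rw [h2]
    simp [Finset.sum_const, mul_comm]
  -- each x in T has large intersection
  have hbig : ∀ x ∈ T, ε * S.card < ((S ∩ S.image (· + x)).card : ℝ) := by
    intro x hx
    have hx' : P x := (Finset.mem_filter.mp hx).2
    have hcard : (S ∪ S.image (· + x)).card + (S ∩ S.image (· + x)).card
        = S.card + (S.image (· + x)).card := Finset.card_union_add_card_inter S _
    have hcardR : ((S ∪ S.image (· + x)).card : ℝ) + ((S ∩ S.image (· + x)).card : ℝ)
        = (S.card : ℝ) + (S.card : ℝ) := by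
      have h' := hcard
      rw [himg x] at h'
      exact_mod_cast h'
    have := hx'
    simp only [hP] at this
    nlinarith
  -- T is nonempty (0 ∈ T)
  have h0 : (0 : G) ∈ T := by
    refine Finset.mem_filter.mpr ⟨Finset.mem_univ _, ?_⟩
    have : S.image (· + (0:G)) = S := by
      simp
    simp only [hP, this, Finset.union_self]
    nlinarith
  have hTne : T.Nonempty := ⟨0, h0⟩
  -- sum bound
  have hsumT : (T.card : ℝ) * (ε * S.card) < ∑ x ∈ T, ((S ∩ S.image (· + x)).card : ℝ) := by
    calc (T.card : ℝ) * (ε * S.card) = ∑ _x ∈ T, ε * S.card := by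
          rw [Finset.sum_const, nsmul_eq_mul]
      _ < ∑ x ∈ T, ((S ∩ S.image (· + x)).card : ℝ) :=
          Finset.sum_lt_sum_of_nonempty hTne hbig
  have hle : ∑ x ∈ T, ((S ∩ S.image (· + x)).card : ℝ) ≤ (S.card : ℝ) * S.card := by
    have : ∑ x ∈ T, ((S ∩ S.image (· + x)).card : ℝ)
        ≤ ∑ x : G, ((S ∩ S.image (· + x)).card : ℝ) := by
      apply Finset.sum_le_sum_of_subset_of_nonneg (Finset.subset_univ T)
      intro i _ _; positivity
    calc ∑ x ∈ T, ((S ∩ S.image (· + x)).card : ℝ)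
        ≤ ∑ x : G, ((S ∩ S.image (· + x)).card : ℝ) := this
      _ = (S.card : ℝ) * S.card := by exact_mod_cast congrArg Nat.cast hsum
  have key : (T.card : ℝ) * (ε * S.card) < (S.card : ℝ) * S.card := lt_of_lt_of_le hsumT hle
  rw [lt_div_iff₀ hε]
  nlinarith
end

section
/- Let G be a finite abelian group of order h' and let S ⊆ G satisfy h'/2 < |S| < h'; write δ = |S|/h'. Then #{x ∈ G : |S ∪ (S + x)| < (1 − (1−δ)^{3/2})·h'} < (1−δ)^{1/2}·h'. -/
/-!
Let `T = Sᶜ`, so `|T| = (1 - δ) h'` and `S ∪ (S + x)` is the complement of `T ∩ (T + x)`.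
Every `y ∈ T` lies in `T + x` for exactly `|T|` values of `x`, so the sizes `|T ∩ (T + x)|` sum to
`|T|² = (1 - δ)² h'²`. The bad shifts `x` are those with `|T ∩ (T + x)| > (1 - δ)^{3/2} h'`, and by
Markov's inequality there are fewer than `(1 - δ)² h'² / ((1 - δ)^{3/2} h') = (1 - δ)^{1/2} h'`
of them.
-/

open Finset

namespace Finset

section Shifts

variable {G : Type*} [AddCommGroup G] [DecidableEq G]

lemma card_inter_image_add_right (T : Finset G) (x : G) :
    #(T ∩ T.image (· + x)) = ∑ y ∈ T, if y - x ∈ T then 1 else 0 := by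
  rw [← card_filter]
  congr 1
  ext y
  simp [image_add_right, sub_eq_add_neg]

variable [Fintype G]

lemma compl_image_add_right (S : Finset G) (x : G) :
    Sᶜ.image (· + x) = (S.image (· + x))ᶜ := by
  simp only [image_add_right]
  exact preimage_compl' _ _ _

lemma card_union_image_add_right_add_card_compl_inter (S : Finset G) (x : G) :
    #(S ∪ S.image (· + x)) + #(Sᶜ ∩ Sᶜ.image (· + x)) = Fintype.card G := by
  rw [compl_image_add_right, ← compl_union, card_add_card_compl]

lemma sum_card_inter_image_add_right (T : Finset G) :
    ∑ x : G, #(T ∩ T.image (· + x)) = #T ^ 2 := by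
  have hfiber (y : G) : ∑ x : G, (if y - x ∈ T then 1 else 0) = #T := by
    rw [Fintype.sum_equiv (Equiv.subLeft y) (fun x ↦ if y - x ∈ T then 1 else 0)
      (fun z ↦ if z ∈ T then 1 else 0) fun _ ↦ rfl]
    simp
  calc ∑ x : G, #(T ∩ T.image (· + x))
      = ∑ y ∈ T, ∑ x : G, (if y - x ∈ T then 1 else 0) := by
        simp only [card_inter_image_add_right]
        exact sum_comm
    _ = #T ^ 2 := by simp [hfiber, sq]

end Shifts

lemma card_filter_lt_lt_div {ι K : Type*} [Fintype ι] [Field K] [LinearOrder K]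
    [IsStrictOrderedRing K] {f : ι → K} {c M : K} (hf : ∀ i, 0 ≤ f i) (hc : 0 < c) (hM : 0 < M)
    (hsum : ∑ i, f i ≤ M) : (#{i | c < f i} : K) < M / c := by
  rw [lt_div_iff₀ hc]
  rcases eq_empty_or_nonempty ({i | c < f i} : Finset ι) with hB | hB
  · simp [hB, hM]
  calc (#{i | c < f i} : K) * c = ∑ _i ∈ {i | c < f i}, c := by simp
    _ < ∑ i ∈ {i | c < f i}, f i := sum_lt_sum_of_nonempty hB fun i hi ↦ (mem_filter.1 hi).2
    _ ≤ ∑ i, f i := sum_le_sum_of_subset_of_nonneg (subset_univ _) fun i _ _ ↦ hf i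
    _ ≤ M := hsum

end Finset

lemma Real.rpow_one_half_mul_rpow_three_halves {a : ℝ} (ha : 0 ≤ a) :
    a ^ ((1 : ℝ) / 2) * a ^ ((3 : ℝ) / 2) = a ^ 2 := by
  rw [← Real.rpow_add' ha (by norm_num), ← Real.rpow_natCast]
  norm_num

theorem stmt5_general (G : Type) [AddCommGroup G] [Fintype G] [DecidableEq G]
    (S : Finset G)
    (h2 : S.card < Fintype.card G) :
    (({x : G | ((S ∪ S.image (· + x)).card : ℝ)
        < (1 - (1 - (S.card : ℝ) / (Fintype.card G : ℝ)) ^ ((3 : ℝ) / 2)) * Fintype.card G} :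
          Set G).ncard : ℝ)
      < (1 - (S.card : ℝ) / (Fintype.card G : ℝ)) ^ ((1 : ℝ) / 2) * Fintype.card G := by
  set n : ℝ := (Fintype.card G : ℝ)
  set a : ℝ := 1 - (S.card : ℝ) / n
  have hn : 0 < n := by simpa [n] using h2.pos
  have ha : 0 < a := by
    rw [sub_pos, div_lt_one hn, Nat.cast_lt]
    exact h2
  have hcompl : (#Sᶜ : ℝ) = a * n := by
    rw [card_compl, Nat.cast_sub h2.le]
    simp only [a, n]
    field_simp
  have hunion (x : G) : (#(S ∪ S.image (· + x)) : ℝ) = n - #(Sᶜ ∩ Sᶜ.image (· + x)) := by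
    rw [eq_sub_iff_add_eq]
    simp only [n]
    exact_mod_cast card_union_image_add_right_add_card_compl_inter S x
  have hbad : {x : G | (#(S ∪ S.image (· + x)) : ℝ) < (1 - a ^ ((3 : ℝ) / 2)) * n}
      = ↑({x | a ^ ((3 : ℝ) / 2) * n < #(Sᶜ ∩ Sᶜ.image (· + x))} : Finset G) := by
    ext x
    simp only [Set.mem_ofPred_eq, coe_filter, mem_univ, true_and, hunion]
    constructor <;> intro h <;> linarith
  have hsum : ∑ x : G, (#(Sᶜ ∩ Sᶜ.image (· + x)) : ℝ) = (a * n) ^ 2 := by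
    rw [← hcompl]
    exact_mod_cast sum_card_inter_image_add_right Sᶜ
  have hdiv : (a * n) ^ 2 / (a ^ ((3 : ℝ) / 2) * n) = a ^ ((1 : ℝ) / 2) * n := by
    rw [div_eq_iff (by positivity)]
    linear_combination (-n ^ 2) * Real.rpow_one_half_mul_rpow_three_halves ha.le
  rw [hbad, Set.ncard_coe_finset, ← hdiv]
  exact card_filter_lt_lt_div (fun _ ↦ Nat.cast_nonneg _) (by positivity) (by positivity) hsum.le

theorem stmt5 (G : Type) [AddCommGroup G] [Fintype G] [DecidableEq G]
    (S : Finset G) (h1 : (Fintype.card G : ℝ) / 2 < (S.card : ℝ))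
    (h2 : S.card < Fintype.card G) :
    (({x : G | ((S ∪ S.image (· + x)).card : ℝ)
        < (1 - (1 - (S.card : ℝ) / (Fintype.card G : ℝ)) ^ ((3 : ℝ) / 2)) * Fintype.card G} :
          Set G).ncard : ℝ)
      < (1 - (S.card : ℝ) / (Fintype.card G : ℝ)) ^ ((1 : ℝ) / 2) * Fintype.card G :=
  stmt5_general G S h2
end

section
/- For every ε ∈ (0, 1) there exists h₀(ε) such that for every finite abelian group G of order h' > h₀(ε) and every subset A ⊆ G, at least one of the following holds: (i) there exist elements x₁, …, x_k ∈ A with |s({x₁, …, x_k})| > ε²·h' and k < (log h')/(log 2 − ε/2); (ii) there exist elements x₁, …, x_k ∈ A with k < (log h')/(log 2 − ε/2) and a subset Ω ⊆ G with |Ω| < ε·h' and A ⊆ {x₁, …, x_k} ∪ Ω. -/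
/-- The set of all subset sums of a finite set `A` in an additive commutative group. -/
def subsetSums {G : Type*} [AddCommGroup G] [DecidableEq G] (A : Finset G) : Finset G :=
  A.powerset.image fun B => ∑ x ∈ B, x

/-!
Take `X ⊆ A` of maximal size subject to `|X| log 2 ≤ log |S| + w |S| / |G|`, where `S = s(X)` and
`w = 1 / (ε (1 - ε) (2 - ε))`; then `|X| log 2 ≤ log |G| + w`, so
`|X| < log |G| / (log 2 - ε / 2)` once `|G|` is large.
Let `Ω` be the set of shifts `y` for which `S` and `y + S` share more than `|S|² / (ε |G|)`
elements. The overlaps sum to `|S|²` over all `y`, so `|Ω| < ε |G|`. If `|S| ≤ ε² |G|` and some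
`x ∈ A` lies outside `X ∪ Ω`, then `|s(X ∪ {x})| ≥ |S| (2 - u)` with `u = |S| / (ε |G|) ≤ ε`, and
the constraint survives adding `x`: the loss `log 2 - log (2 - u) ≤ u / (2 - ε)` is repaid by the
linear term, since `|S|` grows by at least `(1 - ε) |S|`. Maximality of `X` thus leaves either
`|S| > ε² |G|` or `A ⊆ X ∪ Ω`.
-/

open Finset Real
open scoped Pointwise

lemma Finset.exists_fin_enum_image_univ {α : Type*} [DecidableEq α] (X : Finset α) :
    ∃ x : Fin #X → α, univ.image x = X :=
  ⟨Subtype.val ∘ X.equivFin.symm, by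
    rw [← image_image, image_univ_equiv, univ_eq_attach, attach_image_val]⟩

lemma Finset.card_filter_lt_mul_lt_sum {ι : Type*} [Fintype ι] {f : ι → ℝ} (hf : ∀ i, 0 ≤ f i)
    (t : ℝ) (hpos : 0 < ∑ i, f i) : #{i | t < f i} * t < ∑ i, f i := by
  rcases eq_empty_or_nonempty (univ.filter fun i => t < f i) with hempty | hne
  · simpa [hempty] using hpos
  · calc #{i | t < f i} * t = ∑ _ ∈ {i | t < f i}, t := by simp
      _ < ∑ i ∈ {i | t < f i}, f i := sum_lt_sum_of_nonempty hne fun i hi => (mem_filter.1 hi).2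
      _ ≤ ∑ i, f i := sum_le_sum_of_subset_of_nonneg (subset_univ _) fun i _ _ => hf i

section SubsetSums

variable {G : Type*} [AddCommGroup G] [DecidableEq G]

lemma zero_mem_subsetSums (X : Finset G) : (0 : G) ∈ subsetSums X :=
  mem_image.2 ⟨∅, empty_mem_powerset X, sum_empty⟩

lemma subsetSums_empty : subsetSums (∅ : Finset G) = {0} := by
  simp [subsetSums]

lemma subsetSums_insert {x : G} {X : Finset G} (hx : x ∉ X) :
    subsetSums (insert x X) = subsetSums X ∪ (x +ᵥ subsetSums X) := by
  rw [subsetSums, powerset_insert, image_union, image_image, vadd_finset_def, subsetSums,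
    image_image]
  refine congrArg _ (image_congr fun B hB => ?_)
  simp [sum_insert fun h => hx (mem_powerset.1 hB h)]

lemma card_subsetSums_insert_add_card_inter {x : G} {X : Finset G} (hx : x ∉ X) :
    #(subsetSums (insert x X)) + #(subsetSums X ∩ (x +ᵥ subsetSums X)) =
      2 * #(subsetSums X) := by
  rw [subsetSums_insert hx, card_union_add_card_inter, card_vadd_finset, two_mul]

end SubsetSums

lemma Finset.sum_card_inter_vadd {G : Type*} [AddCommGroup G] [DecidableEq G] [Fintype G]
    (S : Finset G) : ∑ y : G, #(S ∩ (y +ᵥ S)) = #S ^ 2 := by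
  simp_rw [card_inter_vadd, addConvolution]
  rw [← card_eq_sum_card_fiberwise (f := fun ab : G × G => ab.1 + ab.2) (t := univ)
    (by simp [Set.MapsTo]), card_product, card_neg, sq]

noncomputable def potentialWeight (ε : ℝ) : ℝ := 1 / (ε * (1 - ε) * (2 - ε))

noncomputable def potential (ε N s : ℝ) : ℝ := log s + potentialWeight ε * s / N

section Potential

variable {ε N s s' : ℝ}

lemma potentialWeight_pos (hε : 0 < ε) (hε1 : ε < 1) : 0 < potentialWeight ε := by
  unfold potentialWeight
  have : 0 < 1 - ε := by linarith
  have : 0 < 2 - ε := by linarith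
  positivity

lemma log_two_sub_div_le_log_two_sub {u : ℝ} (hu0 : 0 ≤ u) (huε : u ≤ ε) (hε : ε < 2) :
    log 2 - u / (2 - ε) ≤ log (2 - u) := by
  have h2u : 0 < 2 - u := by linarith
  have key := one_sub_inv_le_log_of_pos (div_pos h2u two_pos)
  rw [log_div h2u.ne' two_ne_zero, inv_div,
    show 1 - 2 / (2 - u) = -(u / (2 - u)) by field_simp; ring] at key
  have : u / (2 - u) ≤ u / (2 - ε) := div_le_div_of_nonneg_left hu0 (by linarith) (by linarith)
  linarith

lemma potential_add_log_two_le (hε : 0 < ε) (hε1 : ε < 1) (hs : 0 < s) (hsN : s ≤ ε ^ 2 * N)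
    (hs' : 2 * s - s ^ 2 / (ε * N) ≤ s') :
    potential ε N s + log 2 ≤ potential ε N s' := by
  have hN : 0 < N := pos_of_mul_pos_right (hs.trans_le hsN) (sq_nonneg ε)
  set u := s / (ε * N) with hu
  have hu0 : 0 ≤ u := by positivity
  have huε : u ≤ ε := by
    rw [hu, div_le_iff₀ (by positivity)]
    nlinarith
  have hs'u : s * (2 - u) ≤ s' := by
    calc s * (2 - u) = 2 * s - s ^ 2 / (ε * N) := by rw [hu]; ring
      _ ≤ s' := hs'
  have hlog : log s + log (2 - u) ≤ log s' := by
    rw [← log_mul hs.ne' (by linarith)]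
    exact log_le_log (by nlinarith) hs'u
  have hlin : u / (2 - ε) ≤ potentialWeight ε * s' / N - potentialWeight ε * s / N := by
    have h1ε : 0 < 1 - ε := by linarith
    have h2ε : 0 < 2 - ε := by linarith
    have hgrowth : (1 - ε) * s ≤ s' - s := by nlinarith
    calc u / (2 - ε) = potentialWeight ε * ((1 - ε) * s) / N := by
          rw [hu, potentialWeight]; field_simp
      _ ≤ potentialWeight ε * (s' - s) / N := by
          gcongr
          exact (potentialWeight_pos hε hε1).le
      _ = _ := by ring
  unfold potential
  linarith [log_two_sub_div_le_log_two_sub hu0 huε (by linarith)]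

lemma potential_le_log_add_potentialWeight (hε : 0 < ε) (hε1 : ε < 1) (hs : 0 < s)
    (hsN : s ≤ N) : potential ε N s ≤ log N + potentialWeight ε := by
  have hN : 0 < N := hs.trans_le hsN
  have : potentialWeight ε * s / N ≤ potentialWeight ε := by
    rw [div_le_iff₀ hN]
    exact mul_le_mul_of_nonneg_left hsN (potentialWeight_pos hε hε1).le
  unfold potential
  linarith [log_le_log hs hsN]

lemma lt_log_div_of_mul_log_two_le {D L k : ℝ} (hε : 0 < ε) (hε1 : ε < 1) (hD : 0 ≤ D)
    (hL : 2 * D / ε < L) (hk : k * log 2 ≤ L + D) : k < L / (log 2 - ε / 2) := by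
  have hlog2 : 0.69 < log 2 := by linarith [log_two_gt_d9]
  have hlog2' : log 2 < 1 := by linarith [log_two_lt_d9]
  have hc : 0 < log 2 - ε / 2 := by linarith
  have hDL : D < L * (ε / 2) := by
    rw [div_lt_iff₀ hε] at hL; linarith
  rw [lt_div_iff₀ hc]
  nlinarith

end Potential

section Greedy

variable {G : Type*} [AddCommGroup G] [Fintype G] [DecidableEq G] {ε : ℝ}

lemma card_filter_lt_card_inter_vadd_lt (hε : 0 < ε) {S : Finset G} (hS : S.Nonempty) :
    (#({y | (#S : ℝ) ^ 2 / (ε * Fintype.card G) < #(S ∩ (y +ᵥ S))} : Finset G) : ℝ) <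
      ε * Fintype.card G := by
  have hN : (0 : ℝ) < Fintype.card G := by exact_mod_cast Fintype.card_pos_iff.2 ⟨hS.choose⟩
  have hsum : ∑ y : G, (#(S ∩ (y +ᵥ S)) : ℝ) = (#S : ℝ) ^ 2 := by
    exact_mod_cast sum_card_inter_vadd S
  have hS' : (0 : ℝ) < #S := by exact_mod_cast hS.card_pos
  have hmarkov := card_filter_lt_mul_lt_sum (f := fun y : G => (#(S ∩ (y +ᵥ S)) : ℝ))
    (fun _ => Nat.cast_nonneg _) ((#S : ℝ) ^ 2 / (ε * Fintype.card G))
    (by simp only [hsum]; positivity)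
  rw [hsum, mul_div_assoc', div_lt_iff₀ (by positivity)] at hmarkov
  exact lt_of_mul_lt_mul_right (by nlinarith) (sq_nonneg (#S : ℝ))

lemma potential_add_log_two_le_potential_insert (hε : 0 < ε) (hε1 : ε < 1) {x : G}
    {X : Finset G} (hx : x ∉ X) (hsmall : (#(subsetSums X) : ℝ) ≤ ε ^ 2 * Fintype.card G)
    (hoverlap : (#(subsetSums X ∩ (x +ᵥ subsetSums X)) : ℝ) ≤
      (#(subsetSums X) : ℝ) ^ 2 / (ε * Fintype.card G)) :
    potential ε (Fintype.card G) #(subsetSums X) + log 2 ≤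
      potential ε (Fintype.card G) #(subsetSums (insert x X)) := by
  have hcard : (#(subsetSums (insert x X)) : ℝ) + #(subsetSums X ∩ (x +ᵥ subsetSums X)) =
      2 * #(subsetSums X) := by
    exact_mod_cast card_subsetSums_insert_add_card_inter hx
  refine potential_add_log_two_le hε hε1 ?_ hsmall (by linarith)
  exact_mod_cast card_pos.2 ⟨0, zero_mem_subsetSums X⟩

theorem exists_subset_subsetSums_large_or_cover (hε : 0 < ε) (hε1 : ε < 1) (A : Finset G) :
    ∃ X ⊆ A, #X * log 2 ≤ log (Fintype.card G) + potentialWeight ε ∧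
      ((ε ^ 2 * Fintype.card G : ℝ) < #(subsetSums X) ∨
        ∃ Ω : Finset G, (#Ω : ℝ) < ε * Fintype.card G ∧ A ⊆ X ∪ Ω) := by
  set F := A.powerset.filter fun X => #X * log 2 ≤ potential ε (Fintype.card G) #(subsetSums X)
  have hempty : ∅ ∈ F := by
    refine mem_filter.2 ⟨empty_mem_powerset A, ?_⟩
    simp only [subsetSums_empty, card_empty, card_singleton, potential, Nat.cast_zero,
      Nat.cast_one, zero_mul, log_one, zero_add, mul_one]
    exact div_nonneg (potentialWeight_pos hε hε1).le (Nat.cast_nonneg _)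
  obtain ⟨X, hXF, hmax⟩ := F.exists_max_image card ⟨∅, hempty⟩
  obtain ⟨hXA, hXpot⟩ := mem_filter.1 hXF
  have hS : 0 < #(subsetSums X) := card_pos.2 ⟨0, zero_mem_subsetSums X⟩
  refine ⟨X, mem_powerset.1 hXA, hXpot.trans (potential_le_log_add_potentialWeight hε hε1
    (by exact_mod_cast hS) (by exact_mod_cast card_le_univ _)), ?_⟩
  refine or_iff_not_imp_left.2 fun hsmall => ?_
  refine ⟨_, card_filter_lt_card_inter_vadd_lt hε ⟨0, zero_mem_subsetSums X⟩, fun a ha => ?_⟩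
  by_contra haXΩ
  simp only [mem_union, mem_filter, mem_univ, true_and, not_or, not_lt] at haXΩ
  obtain ⟨haX, hoverlap⟩ := haXΩ
  have hinsert : insert a X ∈ F := by
    refine mem_filter.2 ⟨mem_powerset.2 (insert_subset ha (mem_powerset.1 hXA)), ?_⟩
    rw [card_insert_of_notMem haX, Nat.cast_succ, add_one_mul]
    linarith [potential_add_log_two_le_potential_insert hε hε1 haX (not_lt.1 hsmall) hoverlap]
  have := hmax _ hinsert
  rw [card_insert_of_notMem haX] at this
  omega

end Greedy

theorem stmt6 (ε : ℝ) (hε : 0 < ε) (hε1 : ε < 1) :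
    ∃ h₀ : ℕ, ∀ (G : Type) [AddCommGroup G] [Fintype G] [DecidableEq G],
      h₀ < Fintype.card G →
      ∀ A : Finset G,
        (∃ (k : ℕ) (x : Fin k → G), (∀ i, x i ∈ A) ∧
          ε ^ 2 * (Fintype.card G : ℝ) < ((subsetSums (Finset.image x Finset.univ)).card : ℝ) ∧
          (k : ℝ) < Real.log (Fintype.card G) / (Real.log 2 - ε / 2)) ∨
        (∃ (k : ℕ) (x : Fin k → G) (Ω : Finset G), (∀ i, x i ∈ A) ∧
          (k : ℝ) < Real.log (Fintype.card G) / (Real.log 2 - ε / 2) ∧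
          (Ω.card : ℝ) < ε * (Fintype.card G : ℝ) ∧
          A ⊆ Finset.image x Finset.univ ∪ Ω) := by
  refine ⟨⌈exp (2 * potentialWeight ε / ε)⌉₊, fun G _ _ _ hG A => ?_⟩
  have hlog : 2 * potentialWeight ε / ε < log (Fintype.card G) :=
    (lt_log_iff_exp_lt (by positivity)).2 ((Nat.le_ceil _).trans_lt (by exact_mod_cast hG))
  obtain ⟨X, hXA, hXcard, hX⟩ := exists_subset_subsetSums_large_or_cover hε hε1 A
  obtain ⟨x, hx⟩ := X.exists_fin_enum_image_univ
  have hxA : ∀ i, x i ∈ A := fun i => hXA (hx ▸ mem_image_of_mem x (mem_univ i))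
  rw [← hx] at hX
  have hk := lt_log_div_of_mul_log_two_le hε hε1 (potentialWeight_pos hε hε1).le hlog hXcard
  rcases hX with hlarge | ⟨Ω, hΩ, hcover⟩
  · exact Or.inl ⟨_, x, hxA, hlarge, hk⟩
  · exact Or.inr ⟨_, x, Ω, hxA, hk, hΩ, hcover⟩
end
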